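/- The lifting map A ↦ rowspace([I_m | A]) from m×n matrices over a field F to m-dimensional subspaces of F^{m+n} is injective. Consequently, a lifted MRD code with minimum rank distance δ = d/2 in F_q^{m×n} (m = k, n = v - k) yields q^{max(k,v-k)·(min(k,v-k) - d/2 + 1)} distinct k-dimensional subspaces of F_q^v whose pairwise subspace distance is at least d, provided k ≤ v and d ≤ 2·min(k, v-k) with d even. -/

import Mathlib

open Module

/-!
The rows of `[I | A]` are the vectors `(x, x A)`, so `A` is read off from its lifting, the lifting
has dimension `m`, and `x ↦ (x, x A)` maps `ker (A - B)` onto the intersection of the liftings of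
`A` and `B`; hence the subspace distance of two liftings is twice the rank distance of the
matrices. Codes meeting the Delsarte bound are Gabidulin codes: for `M ≤ N` embed `F_q^M` into
`F_{q^N}` and take the maps `x ↦ ∑_{i ≤ M - δ} c_i x^(q^i)`. A nonzero such map has at most
`q^(M-δ)` roots, so its kernel has dimension at most `M - δ` and its rank is at least `δ`; this gives
`q^(N (M - δ + 1))` matrices of pairwise rank distance at least `δ`, and transposing covers `m > n`.
-/

namespace FiniteField

open Polynomial

variable {L : Type*} [Field L] {K : ℕ}

noncomputable def linearizedPolynomial (q : ℕ) (c : Fin K → L) : L[X] :=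
  ∑ i, C (c i) * X ^ q ^ (i : ℕ)

lemma coeff_linearizedPolynomial {q : ℕ} (hq : 1 < q) (c : Fin K → L) (i : Fin K) :
    (linearizedPolynomial q c).coeff (q ^ (i : ℕ)) = c i := by
  rw [linearizedPolynomial, finsetSum_coeff, Finset.sum_eq_single i]
  · simp
  · intro j _ hji
    rw [coeff_C_mul_X_pow, if_neg]
    exact fun h => hji (Fin.ext (Nat.pow_right_injective hq h).symm)
  · simp

lemma natDegree_linearizedPolynomial_le {q : ℕ} (hq : 0 < q) (c : Fin K → L) :
    (linearizedPolynomial q c).natDegree ≤ q ^ (K - 1) := by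
  refine natDegree_sum_le_of_forall_le _ _ fun i _ => (natDegree_C_mul_X_pow_le _ _).trans ?_
  exact Nat.pow_le_pow_right hq (by omega)

variable (F : Type*) [Field F] [Fintype F] [Algebra F L]

noncomputable def linearizedMap (c : Fin K → L) : L →ₗ[F] L :=
  ∑ i, c i • (frobeniusAlgHom F L ^ (i : ℕ)).toLinearMap

variable {F}

lemma linearizedMap_apply (c : Fin K → L) (x : L) :
    linearizedMap F c x = (linearizedPolynomial (Fintype.card F) c).eval x := by
  simp [linearizedMap, linearizedPolynomial, eval_finsetSum, AlgHom.coe_pow,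
    coe_frobeniusAlgHom, pow_iterate]

lemma linearizedMap_add (c c' : Fin K → L) :
    linearizedMap F (c + c') = linearizedMap F c + linearizedMap F c' := by
  ext x
  simp [linearizedMap, add_mul, Finset.sum_add_distrib]

lemma finrank_ker_linearizedMap_le [Finite L] {c : Fin K → L} (hc : c ≠ 0) :
    finrank F (LinearMap.ker (linearizedMap F c)) ≤ K - 1 := by
  have : Module.Finite F L := .of_finite
  set P := linearizedPolynomial (Fintype.card F) c with hPdef
  obtain ⟨i, hi⟩ := Function.ne_iff.mp hc
  have hP : P ≠ 0 := fun h => hi <| by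
    rw [← coeff_linearizedPolynomial (Fintype.one_lt_card (α := F)) c i, ← hPdef, h, coeff_zero,
      Pi.zero_apply]
  have hker : (LinearMap.ker (linearizedMap F c) : Set L) ⊆ P.rootSet L := fun x hx => by
    rw [mem_rootSet_of_ne hP, coe_aeval_eq_eval, ← linearizedMap_apply]
    exact hx
  have hcard : Fintype.card F ^ finrank F (LinearMap.ker (linearizedMap F c)) ≤
      Fintype.card F ^ (K - 1) :=
    calc _ = Nat.card (LinearMap.ker (linearizedMap F c)) := by
          rw [natCard_eq_pow_finrank (K := F), Nat.card_eq_fintype_card]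
      _ = Set.ncard (LinearMap.ker (linearizedMap F c) : Set L) := Nat.card_coe_set_eq _
      _ ≤ Set.ncard (P.rootSet L) := Set.ncard_le_ncard hker (rootSet_finite _ _)
      _ ≤ _ := (ncard_rootSet_le _ _).trans (natDegree_linearizedPolynomial_le Fintype.card_pos c)
  exact (Nat.pow_le_pow_iff_right Fintype.one_lt_card).mp hcard

lemma le_finrank_range_linearizedMap_comp [Finite L] {V : Type*} [AddCommGroup V] [Module F V]
    [FiniteDimensional F V] {ι : V →ₗ[F] L} (hι : Function.Injective ι) {c : Fin K → L}
    (hc : c ≠ 0) : finrank F V - (K - 1) ≤ finrank F (LinearMap.range (linearizedMap F c ∘ₗ ι)) := by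
  have : Module.Finite F L := .of_finite
  have hker : finrank F (LinearMap.ker (linearizedMap F c ∘ₗ ι)) ≤ K - 1 := calc
    _ = finrank F ((LinearMap.ker (linearizedMap F c ∘ₗ ι)).map ι) :=
      (Submodule.equivMapOfInjective ι hι _).finrank_eq
    _ ≤ finrank F (LinearMap.ker (linearizedMap F c)) := by
      rw [LinearMap.ker_comp]
      exact Submodule.finrank_mono (Submodule.map_comap_le _ _)
    _ ≤ K - 1 := finrank_ker_linearizedMap_le hc
  have := LinearMap.finrank_range_add_finrank_ker (linearizedMap F c ∘ₗ ι)
  omega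

end FiniteField

lemma LinearMap.rank_toMatrix' {F : Type*} [Field F] {m n : Type*} [Fintype n] [DecidableEq n]
    (g : (n → F) →ₗ[F] (m → F)) :
    (LinearMap.toMatrix' g).rank = finrank F (LinearMap.range g) := by
  rw [Matrix.rank, ← Matrix.toLin'_apply', Matrix.toLin'_toMatrix']

namespace Matrix

section RankMetricCodes

variable {F : Type*} [Field F] {m n : Type*} [Fintype n]

def HasMinRankDist (S : Finset (Matrix m n F)) (δ : ℕ) : Prop :=
  ∀ A ∈ S, ∀ B ∈ S, A ≠ B → δ ≤ (A - B).rank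

lemma HasMinRankDist.map_transpose [Fintype m] {S : Finset (Matrix m n F)} {δ : ℕ}
    (h : HasMinRankDist S δ) : HasMinRankDist (S.map ⟨transpose, transpose_injective⟩) δ := by
  simp only [HasMinRankDist, Finset.mem_map, Function.Embedding.coeFn_mk]
  rintro _ ⟨A, hA, rfl⟩ _ ⟨B, hB, rfl⟩ hne
  rw [← transpose_sub, rank_transpose]
  exact h A hA B hB fun h => hne (h ▸ rfl)

lemma exists_card_eq_hasMinRankDist_of_addMonoidHom {G : Type*} [AddGroup G] [Fintype G]
    (Φ : G →+ Matrix m n F) {δ : ℕ} (hδ : 1 ≤ δ) (hΦ : ∀ c ≠ 0, δ ≤ (Φ c).rank) :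
    ∃ S : Finset (Matrix m n F), S.card = Fintype.card G ∧ HasMinRankDist S δ := by
  have hΦinj : Function.Injective Φ := by
    refine (injective_iff_map_eq_zero Φ).mpr fun c hc => by_contra fun hc0 => ?_
    have := hΦ c hc0
    rw [hc, rank_zero] at this
    omega
  refine ⟨Finset.univ.map ⟨Φ, hΦinj⟩, by rw [Finset.card_map, Finset.card_univ], ?_⟩
  simp only [HasMinRankDist, Finset.mem_map, Finset.mem_univ, true_and,
    Function.Embedding.coeFn_mk]
  rintro _ ⟨c, rfl⟩ _ ⟨c', rfl⟩ hne
  rw [← map_sub]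
  exact hΦ _ (sub_ne_zero.mpr fun h => hne (h ▸ rfl))

end RankMetricCodes

section Gabidulin

variable {F : Type*} [Field F] [Fintype F]

open FiniteField in
theorem exists_gabidulin_code {M N δ : ℕ} (hδ : 1 ≤ δ) (hδM : δ ≤ M) (hMN : M ≤ N) :
    ∃ S : Finset (Matrix (Fin N) (Fin M) F),
      S.card = Fintype.card F ^ (N * (M - δ + 1)) ∧ HasMinRankDist S δ := by
  obtain ⟨p, _⟩ := CharP.exists F
  have : Fact p.Prime := ⟨(FiniteField.card F p).choose_spec.1⟩
  have : NeZero N := ⟨by omega⟩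
  let L := Extension F p N
  have hL : finrank F L = N := finrank_extension F p N
  obtain ⟨ι, hι⟩ := finrank_le_iff_exists_linearMap.mp
    (show finrank F (Fin M → F) ≤ finrank F L by rw [hL, finrank_fin_fun]; exact hMN)
  let e : L ≃ₗ[F] (Fin N → F) := .ofFinrankEq _ _ (by rw [hL, finrank_fin_fun])
  let Φ : (Fin (M - δ + 1) → L) →+ Matrix (Fin N) (Fin M) F :=
    AddMonoidHom.mk' (fun c => LinearMap.toMatrix' (e.toLinearMap ∘ₗ linearizedMap F c ∘ₗ ι))
      fun c c' => by simp [linearizedMap_add, LinearMap.add_comp, LinearMap.comp_add]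
  have : Fintype L := .ofFinite L
  obtain ⟨S, hcard, hS⟩ := exists_card_eq_hasMinRankDist_of_addMonoidHom Φ hδ fun c hc => by
    have := le_finrank_range_linearizedMap_comp hι hc
    rw [finrank_fin_fun] at this
    show δ ≤ (LinearMap.toMatrix' _).rank
    rw [LinearMap.rank_toMatrix', LinearMap.range_comp, LinearEquiv.finrank_map_eq]
    omega
  refine ⟨S, ?_, hS⟩
  rw [hcard, Fintype.card_fun, Fintype.card_fin, ← Nat.card_eq_fintype_card, natCard_extension,
    Nat.card_eq_fintype_card, pow_mul]

theorem exists_mrd_code {m n δ : ℕ} (hδ : 1 ≤ δ) (hδm : δ ≤ m) (hδn : δ ≤ n) :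
    ∃ S : Finset (Matrix (Fin m) (Fin n) F),
      S.card = Fintype.card F ^ (max m n * (min m n - δ + 1)) ∧ HasMinRankDist S δ := by
  rcases le_total m n with hmn | hnm
  · obtain ⟨S, hcard, hS⟩ := exists_gabidulin_code (F := F) hδ hδm hmn
    refine ⟨_, ?_, hS.map_transpose⟩
    rw [Finset.card_map, hcard, max_eq_right hmn, min_eq_left hmn]
  · obtain ⟨S, hcard, hS⟩ := exists_gabidulin_code (F := F) hδ hδn hnm
    exact ⟨S, by rw [hcard, max_eq_left hnm, min_eq_right hnm], hS⟩

end Gabidulin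

section Lifting

variable {F : Type*} [Field F] {m n : Type*} [Fintype m]

lemma finrank_range_vecMulLinear [Fintype n] (A : Matrix m n F) :
    finrank F (LinearMap.range A.vecMulLinear) = A.rank := by
  rw [← rank_transpose, rank, mulVecLin_transpose]

variable [DecidableEq m]

noncomputable def lifting (A : Matrix m n F) : Submodule F (m ⊕ n → F) :=
  LinearMap.range (fromCols (1 : Matrix m m F) A).vecMulLinear

lemma vecMul_fromCols_one (x : m → F) (A : Matrix m n F) :
    x ᵥ* fromCols (1 : Matrix m m F) A = Sum.elim x (x ᵥ* A) := by
  rw [vecMul_fromCols, vecMul_one]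

lemma vecMulLinear_fromCols_one_injective (A : Matrix m n F) :
    Function.Injective (fromCols (1 : Matrix m m F) A).vecMulLinear := fun x y h => by
  simp only [vecMulLinear_apply, vecMul_fromCols_one] at h
  exact funext fun i => congrFun h (.inl i)

lemma sum_elim_mem_lifting (x : m → F) (A : Matrix m n F) : Sum.elim x (x ᵥ* A) ∈ lifting A :=
  ⟨x, vecMul_fromCols_one x A⟩

lemma vecMul_eq_of_sum_elim_mem_lifting {x : m → F} {y : n → F} {A : Matrix m n F}
    (h : Sum.elim x y ∈ lifting A) : x ᵥ* A = y := by
  obtain ⟨x', hx'⟩ := h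
  rw [vecMulLinear_apply, vecMul_fromCols_one] at hx'
  obtain rfl : x' = x := funext fun i => congrFun hx' (.inl i)
  exact funext fun j => congrFun hx' (.inr j)

lemma lifting_injective : Function.Injective (lifting (F := F) (m := m) (n := n)) := by
  intro A B h
  ext i j
  have hmem := h ▸ sum_elim_mem_lifting (Pi.single i 1) A
  simpa [single_one_vecMul] using (congrFun (vecMul_eq_of_sum_elim_mem_lifting hmem) j).symm

lemma finrank_lifting (A : Matrix m n F) : finrank F (lifting A) = Fintype.card m := by
  rw [lifting, LinearMap.finrank_range_of_inj (vecMulLinear_fromCols_one_injective A),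
    finrank_fintype_fun_eq_card]

lemma lifting_inf_lifting (A B : Matrix m n F) :
    lifting A ⊓ lifting B =
      (LinearMap.ker (A - B).vecMulLinear).map (fromCols (1 : Matrix m m F) A).vecMulLinear := by
  apply le_antisymm
  · rintro _ ⟨⟨x, rfl⟩, hB⟩
    rw [vecMulLinear_apply, vecMul_fromCols_one] at hB ⊢
    refine ⟨x, ?_, by rw [vecMulLinear_apply, vecMul_fromCols_one]⟩
    rw [SetLike.mem_coe, LinearMap.mem_ker, vecMulLinear_apply, vecMul_sub,
      vecMul_eq_of_sum_elim_mem_lifting hB, sub_self]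
  · rintro _ ⟨x, hx, rfl⟩
    rw [SetLike.mem_coe, LinearMap.mem_ker, vecMulLinear_apply, vecMul_sub, sub_eq_zero] at hx
    rw [vecMulLinear_apply, vecMul_fromCols_one]
    exact ⟨sum_elim_mem_lifting x A, hx ▸ sum_elim_mem_lifting x B⟩

lemma finrank_lifting_inf_lifting_add_rank [Fintype n] (A B : Matrix m n F) :
    finrank F ↥(lifting A ⊓ lifting B) + (A - B).rank = Fintype.card m := by
  rw [lifting_inf_lifting, ← (Submodule.equivMapOfInjective _
    (vecMulLinear_fromCols_one_injective A) _).finrank_eq, ← finrank_range_vecMulLinear, add_comm,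
    LinearMap.finrank_range_add_finrank_ker, finrank_fintype_fun_eq_card]

theorem subspaceDist_lifting [Fintype n] (A B : Matrix m n F) :
    (finrank F (lifting A) + finrank F (lifting B) - 2 * finrank F ↥(lifting A ⊓ lifting B) : ℤ) =
      2 * (A - B).rank := by
  have := finrank_lifting_inf_lifting_add_rank A B
  rw [finrank_lifting, finrank_lifting]
  omega

end Lifting

end Matrix

/-- The lifting map `A ↦ rowspace [I | A]` is injective; consequently a lifted MRD code with
minimum rank distance `δ = d/2` yields `q ^ (max m n * (min m n - δ + 1))` distinct
`m`-dimensional subspaces of `F_q^{m+n}` (here `m = k`, `n = v - k`) with pairwise subspace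
distance at least `d = 2δ`. -/
theorem lifting_injective_and_lifted_MRD {F : Type*} [Field F] [Fintype F] {q m n δ : ℕ}
    (hq : Fintype.card F = q) (hδ1 : 1 ≤ δ) (hδm : δ ≤ m) (hδn : δ ≤ n) :
    Function.Injective (fun A : Matrix (Fin m) (Fin n) F =>
      LinearMap.range (Matrix.fromCols (1 : Matrix (Fin m) (Fin m) F) A).vecMulLinear) ∧
    ∃ C : Finset (Submodule F (Fin m ⊕ Fin n → F)),
      C.card = q ^ (max m n * (min m n - δ + 1)) ∧
      (∀ U ∈ C, finrank F U = m) ∧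
      (∀ U ∈ C, ∀ W ∈ C, U ≠ W →
        (2 * δ : ℤ) ≤ finrank F U + finrank F W - 2 * finrank F ↥(U ⊓ W)) := by
  obtain ⟨S, hcard, hS⟩ := Matrix.exists_mrd_code (F := F) hδ1 hδm hδn
  refine ⟨Matrix.lifting_injective, S.map ⟨Matrix.lifting, Matrix.lifting_injective⟩, ?_, ?_, ?_⟩
  · rw [Finset.card_map, hcard, hq]
  · simp [Matrix.finrank_lifting]
  · simp only [Finset.mem_map, Function.Embedding.coeFn_mk]
    rintro _ ⟨A, hA, rfl⟩ _ ⟨B, hB, rfl⟩ hne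
    rw [Matrix.subspaceDist_lifting]
    exact_mod_cast Nat.mul_le_mul_left 2 (hS A hA B hB fun h => hne (h ▸ rfl))
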